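/- arXiv:1510.09206 — 5 statements merged into one kernel-verified Lean document; each statement's English description precedes it below -/
import Mathlib

section
/- Let n ≥ 2 and k ≥ 1. For a regular k-jet γ of a curve in ℂⁿ, let S_γ = {Ψ ∈ J : Ψ∘γ ≡ 0 (mod t^{k+1})}, where J is the vector space of polynomials in n variables over ℂ with zero constant term and total degree ≤ k, and Ψ∘γ denotes substitution of γ into Ψ followed by reduction modulo t^{k+1}. Then for any two regular k-jets γ and δ of curves in ℂⁿ, one has S_γ = S_δ if and only if there exists a reparametrisation k-jet φ with δ ≡ γ∘φ (mod t^{k+1}). In particular, the map γ ↦ S_γ induces an injective map from the set of orbits of the reparametrisation group acting on regular k-jets of curves to the set of linear subspaces of J. -/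
open Polynomial

/-- For a `k`-jet `γ` of a curve in `ℂⁿ`, the solution space
`S_γ = {Ψ ∈ J : Ψ ∘ γ ≡ 0 (mod t^{k+1})}`, where `J` is the space of polynomials in `n`
variables with zero constant term and total degree at most `k`. -/
def solutionSpace (n k : ℕ) (γ : Fin n → Polynomial ℂ) : Set (MvPolynomial (Fin n) ℂ) :=
  {Ψ : MvPolynomial (Fin n) ℂ |
    Ψ.totalDegree ≤ k ∧ MvPolynomial.coeff 0 Ψ = 0 ∧
    ∀ j ≤ k, (MvPolynomial.aeval γ Ψ).coeff j = 0}

/-! Some coordinate `γᵢ` of `γ` has `γᵢ'(0) ≠ 0`, so it has a compositional inverse `ψ` modulo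
`t^{k+1}`. For every `ℓ`, the polynomial `xₗ - γₗ(ψ(xᵢ))` truncated to degree `k` lies in `S_γ`;
if it also lies in `S_δ`, then `δₗ ≡ γₗ ∘ φ` with `φ = ψ ∘ δᵢ`, and `φ'(0) ≠ 0` because
`δ'(0) = γ'(0) φ'(0) ≠ 0`. Conversely, `Ψ ∘ (γ ∘ φ) = (Ψ ∘ γ) ∘ φ`, and composing with a regular
`φ` neither creates nor destroys divisibility by `t^{k+1}`. -/

theorem dvd_sub_trans {R : Type*} [Ring R] {a x y z : R} (hxy : a ∣ x - y) (hyz : a ∣ y - z) :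
    a ∣ x - z := by
  simpa only [sub_add_sub_cancel] using dvd_add hxy hyz

namespace Polynomial

section CommSemiring

variable {R : Type*} [CommSemiring R]

theorem coeff_zero_comp {p q : R[X]} (hq : q.coeff 0 = 0) : (p.comp q).coeff 0 = p.coeff 0 := by
  rw [coeff_zero_eq_eval_zero, eval_comp, ← coeff_zero_eq_eval_zero, hq,
    ← coeff_zero_eq_eval_zero]

theorem coeff_one_comp {p q : R[X]} (hq : q.coeff 0 = 0) :
    (p.comp q).coeff 1 = p.coeff 1 * q.coeff 1 := by
  have h := congrArg (coeff · 0) (derivative_comp p q)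
  simp only [coeff_derivative, mul_coeff_zero, coeff_zero_comp hq] at h
  simpa [mul_comm] using h

end CommSemiring

variable {R : Type*} [CommRing R]

theorem X_pow_dvd_sub_iff {N : ℕ} {p q : R[X]} :
    X ^ N ∣ p - q ↔ ∀ j < N, p.coeff j = q.coeff j := by
  simp only [X_pow_dvd_iff, coeff_sub, sub_eq_zero]

theorem X_pow_dvd_sub_trunc (N : ℕ) (p : R[X]) :
    X ^ N ∣ p - PowerSeries.trunc N (p : PowerSeries R) :=
  X_pow_dvd_sub_iff.mpr fun j hj => by rw [PowerSeries.coeff_trunc, if_pos hj, coeff_coe]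

theorem X_pow_dvd_comp_sub_comp {N : ℕ} {p q g : R[X]} (hg : g.coeff 0 = 0)
    (h : X ^ N ∣ p - q) : X ^ N ∣ p.comp g - q.comp g := by
  obtain ⟨r, hr⟩ := h
  rw [← sub_comp, hr, mul_comp, X_pow_comp]
  exact (pow_dvd_pow_of_dvd (X_dvd_iff.mpr hg) N).mul_right _

theorem sub_dvd_comp_sub_comp (p g h : R[X]) : g - h ∣ p.comp g - p.comp h := by
  unfold comp
  simpa only [eval_map] using sub_dvd_eval_sub g h (p.map C)

theorem X_pow_dvd_comp_iff {φ : R[X]} (hφ0 : φ.coeff 0 = 0) (hφ1 : IsUnit (φ.coeff 1))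
    {p : R[X]} {N : ℕ} : X ^ N ∣ p.comp φ ↔ X ^ N ∣ p := by
  refine ⟨fun h => ?_, fun h => by
    simpa only [zero_comp, sub_zero] using X_pow_dvd_comp_sub_comp (q := 0) hφ0 (by rwa [sub_zero])⟩
  obtain ⟨u, hu⟩ := X_dvd_iff.mpr hφ0
  have hu0 : IsUnit (u.coeff 0) := by simpa [hu, coeff_X_mul_zero] using hφ1
  induction N with
  | zero => exact one_dvd p
  | succ N ih =>
    obtain ⟨g, rfl⟩ := ih ((pow_dvd_pow X N.le_succ).trans h)
    have hcomp : (X ^ N * g).comp φ = X ^ N * (u ^ N * g.comp φ) := by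
      rw [mul_comp, X_pow_comp, hu, mul_pow, mul_assoc]
    have hg0 : u.coeff 0 ^ N * g.coeff 0 = 0 := by
      have := X_pow_dvd_iff.mp h N N.lt_succ_self
      rwa [hcomp, coeff_X_pow_mul', if_pos le_rfl, Nat.sub_self, mul_coeff_zero,
        ← constantCoeff_apply, map_pow, constantCoeff_apply, coeff_zero_comp hφ0] at this
    obtain ⟨g', rfl⟩ := X_dvd_iff.mpr ((hu0.pow N).mul_right_eq_zero.mp hg0)
    exact ⟨g', by ring⟩

theorem exists_X_pow_dvd_comp_sub_X {g : R[X]} (hg0 : g.coeff 0 = 0) (hg1 : IsUnit (g.coeff 1))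
    (N : ℕ) : ∃ ψ : R[X], X ^ N ∣ ψ.comp g - X := by
  obtain ⟨u, hu⟩ := X_dvd_iff.mpr hg0
  have hu0 : IsUnit (u.coeff 0) := by simpa [hu, coeff_X_mul_zero] using hg1
  induction N with
  | zero => exact ⟨0, one_dvd _⟩
  | succ N ih =>
    obtain ⟨ψ, r, hr⟩ := ih
    -- `c * (g.coeff 1) ^ N = r.coeff 0`, so subtracting `C c * X ^ N` from `ψ` cancels the
    -- `X ^ N` term of `ψ.comp g - X`
    set c := r.coeff 0 * ↑(hu0.unit⁻¹ ^ N)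
    refine ⟨ψ - C c * X ^ N, ?_⟩
    have hcomp : (ψ - C c * X ^ N).comp g - X = X ^ N * (r - C c * u ^ N) := by
      have hgN : g ^ N = X ^ N * u ^ N := by rw [hu, mul_pow]
      rw [sub_comp, mul_comp, C_comp, X_pow_comp, hgN, mul_sub, ← hr]
      ring
    rw [hcomp, pow_succ]
    refine mul_dvd_mul_left _ (X_dvd_iff.mpr ?_)
    rw [coeff_sub, coeff_C_mul, ← constantCoeff_apply (u ^ N), map_pow, constantCoeff_apply]
    simp [c, mul_assoc, ← mul_pow]

theorem totalDegree_toMvPolynomial_le {S σ : Type*} [CommSemiring S] [Nontrivial S] (p : S[X])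
    (i : σ) : (p.toMvPolynomial i).totalDegree ≤ p.natDegree := by
  rw [toMvPolynomial, aeval_eq_sum_range]
  refine MvPolynomial.totalDegree_finsetSum_le fun m hm => ?_
  refine (MvPolynomial.totalDegree_smul_le _ _).trans ?_
  rw [MvPolynomial.totalDegree_X_pow]
  exact Nat.lt_succ_iff.mp (Finset.mem_range.mp hm)

end Polynomial

namespace MvPolynomial

variable {σ R : Type*} [CommSemiring R]

theorem dvd_aeval_sub_aeval {A : Type*} [CommRing A] [Algebra R A] {a : A} {f g : σ → A}
    (h : ∀ i, a ∣ f i - g i) (Ψ : MvPolynomial σ R) : a ∣ aeval f Ψ - aeval g Ψ := by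
  induction Ψ using MvPolynomial.induction_on with
  | C r => simp
  | add p q hp hq => simpa only [map_add, add_sub_add_comm] using dvd_add hp hq
  | mul_X p i hp =>
    have e : aeval f (p * X i) - aeval g (p * X i)
        = (aeval f p - aeval g p) * f i + aeval g p * (f i - g i) := by
      simp only [map_mul, aeval_X]; ring
    rw [e]
    exact dvd_add (hp.mul_right _) ((h i).mul_left _)

theorem aeval_comp (γ : σ → R[X]) (φ : R[X]) (Ψ : MvPolynomial σ R) :
    (aeval γ Ψ).comp φ = aeval (fun i => (γ i).comp φ) Ψ := by
  rw [comp_eq_aeval, comp_aeval_apply]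
  rfl

theorem coeff_zero_aeval {γ : σ → R[X]} (hγ : ∀ i, (γ i).coeff 0 = 0) (Ψ : MvPolynomial σ R) :
    (aeval γ Ψ).coeff 0 = Ψ.coeff 0 := by
  have h : ∀ p : R[X], p.coeff 0 = Polynomial.aeval (0 : R) p := fun p => by
    rw [coeff_zero_eq_eval_zero, Polynomial.coe_aeval_eq_eval]
  rw [h, comp_aeval_apply]
  simp [← h, hγ, aeval_zero', constantCoeff_eq]

theorem aeval_X_sub_toMvPolynomial {S : Type*} [CommRing S] (γ : σ → S[X]) (ℓ i : σ) (q : S[X]) :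
    aeval γ (X ℓ - q.toMvPolynomial i) = γ ℓ - q.comp (γ i) := by
  rw [map_sub, aeval_X, aeval_toMvPolynomial, comp_eq_aeval]

end MvPolynomial

section SolutionSpace

variable {n k : ℕ}

theorem mem_solutionSpace_iff {γ : Fin n → ℂ[X]} {Ψ : MvPolynomial (Fin n) ℂ} :
    Ψ ∈ solutionSpace n k γ ↔ Ψ.totalDegree ≤ k ∧ MvPolynomial.coeff 0 Ψ = 0 ∧
      X ^ (k + 1) ∣ MvPolynomial.aeval γ Ψ := by
  simp only [solutionSpace, Set.mem_ofPred_eq, X_pow_dvd_iff, Nat.lt_succ_iff]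

theorem solutionSpace_congr {γ δ : Fin n → ℂ[X]} (h : ∀ i, X ^ (k + 1) ∣ γ i - δ i) :
    solutionSpace n k γ = solutionSpace n k δ := by
  ext Ψ
  simp only [mem_solutionSpace_iff,
    dvd_iff_dvd_of_dvd_sub (MvPolynomial.dvd_aeval_sub_aeval h Ψ)]

theorem solutionSpace_comp {γ : Fin n → ℂ[X]} {φ : ℂ[X]} (hφ0 : φ.coeff 0 = 0)
    (hφ1 : φ.coeff 1 ≠ 0) :
    solutionSpace n k (fun i => (γ i).comp φ) = solutionSpace n k γ := by
  ext Ψ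
  simp only [mem_solutionSpace_iff, ← MvPolynomial.aeval_comp, X_pow_dvd_comp_iff hφ0 hφ1.isUnit]

theorem X_sub_toMvPolynomial_mem_solutionSpace (hk : 1 ≤ k) {γ : Fin n → ℂ[X]}
    (hγ0 : ∀ j, (γ j).coeff 0 = 0) {ψ : ℂ[X]} {i : Fin n}
    (hψ : X ^ (k + 1) ∣ ψ.comp (γ i) - X) (ℓ : Fin n) :
    MvPolynomial.X ℓ -
        (PowerSeries.trunc (k + 1) ((γ ℓ).comp ψ : PowerSeries ℂ)).toMvPolynomial i ∈
      solutionSpace n k γ := by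
  set q := PowerSeries.trunc (k + 1) ((γ ℓ).comp ψ : PowerSeries ℂ)
  have hdvd : X ^ (k + 1) ∣ MvPolynomial.aeval γ (MvPolynomial.X ℓ - q.toMvPolynomial i) := by
    rw [MvPolynomial.aeval_X_sub_toMvPolynomial]
    have hinv : X ^ (k + 1) ∣ (γ ℓ).comp X - (γ ℓ).comp (ψ.comp (γ i)) :=
      dvd_sub_comm.mp (hψ.trans (sub_dvd_comp_sub_comp _ _ _))
    have htrunc := X_pow_dvd_comp_sub_comp (hγ0 i) (X_pow_dvd_sub_trunc (k + 1) ((γ ℓ).comp ψ))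
    rw [comp_X] at hinv
    rw [comp_assoc] at htrunc
    exact dvd_sub_trans hinv htrunc
  refine mem_solutionSpace_iff.mpr ⟨?_, ?_, hdvd⟩
  · refine (MvPolynomial.totalDegree_sub _ _).trans (max_le ?_ ?_)
    · rwa [MvPolynomial.totalDegree_X]
    · exact (totalDegree_toMvPolynomial_le _ _).trans
        (Nat.lt_succ_iff.mp (PowerSeries.natDegree_trunc_lt _ k))
  · rw [← MvPolynomial.coeff_zero_aeval hγ0]
    exact X_pow_dvd_iff.mp hdvd 0 k.succ_pos

theorem exists_reparam_of_solutionSpace_subset (hk : 1 ≤ k) {γ δ : Fin n → ℂ[X]}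
    (hγ0 : ∀ i, (γ i).coeff 0 = 0) (hδ0 : ∀ i, (δ i).coeff 0 = 0) {i : Fin n}
    (hi : (γ i).coeff 1 ≠ 0) (hS : solutionSpace n k γ ⊆ solutionSpace n k δ) :
    ∃ φ : ℂ[X], φ.natDegree ≤ k ∧ φ.coeff 0 = 0 ∧ ∀ ℓ, X ^ (k + 1) ∣ δ ℓ - (γ ℓ).comp φ := by
  obtain ⟨ψ, hψ⟩ := exists_X_pow_dvd_comp_sub_X (hγ0 i) hi.isUnit (k + 1)
  have hψ0 : ψ.coeff 0 = 0 := by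
    simpa [coeff_zero_comp (hγ0 i)] using X_pow_dvd_sub_iff.mp hψ 0 k.succ_pos
  set φ := PowerSeries.trunc (k + 1) (ψ.comp (δ i) : PowerSeries ℂ)
  have hφ : X ^ (k + 1) ∣ ψ.comp (δ i) - φ := X_pow_dvd_sub_trunc _ _
  refine ⟨φ, Nat.lt_succ_iff.mp (PowerSeries.natDegree_trunc_lt _ k), ?_, fun ℓ => ?_⟩
  · rw [← X_pow_dvd_sub_iff.mp hφ 0 k.succ_pos, coeff_zero_comp (hδ0 i), hψ0]
  · have hmem := (mem_solutionSpace_iff.mp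
      (hS (X_sub_toMvPolynomial_mem_solutionSpace hk hγ0 hψ ℓ))).2.2
    rw [MvPolynomial.aeval_X_sub_toMvPolynomial] at hmem
    have htrunc := X_pow_dvd_comp_sub_comp (hδ0 i) (X_pow_dvd_sub_trunc (k + 1) ((γ ℓ).comp ψ))
    rw [comp_assoc] at htrunc
    have hcomp : X ^ (k + 1) ∣ (γ ℓ).comp (ψ.comp (δ i)) - (γ ℓ).comp φ :=
      hφ.trans (sub_dvd_comp_sub_comp _ _ _)
    exact dvd_sub_trans (dvd_sub_trans hmem (dvd_sub_comm.mp htrunc)) hcomp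

end SolutionSpace

theorem solutionSpace_eq_iff_reparam_general
    (n k : ℕ) (hk : 1 ≤ k)
    (γ δ : Fin n → Polynomial ℂ)
    (hγ0 : ∀ i, (γ i).coeff 0 = 0)
    (hγreg : ∃ i, (γ i).coeff 1 ≠ 0)
    (hδ0 : ∀ i, (δ i).coeff 0 = 0)
    (hδreg : ∃ i, (δ i).coeff 1 ≠ 0) :
    solutionSpace n k γ = solutionSpace n k δ ↔
      ∃ φ : Polynomial ℂ, φ.natDegree ≤ k ∧ φ.coeff 0 = 0 ∧ φ.coeff 1 ≠ 0 ∧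
        ∀ i, ∀ j ≤ k, (δ i).coeff j = ((γ i).comp φ).coeff j := by
  constructor
  · intro hS
    obtain ⟨i, hi⟩ := hγreg
    obtain ⟨φ, hφdeg, hφ0, hφ⟩ :=
      exists_reparam_of_solutionSpace_subset hk hγ0 hδ0 hi hS.subset
    have hφ1 : φ.coeff 1 ≠ 0 := by
      obtain ⟨ℓ, hℓ⟩ := hδreg
      rw [X_pow_dvd_sub_iff.mp (hφ ℓ) 1 (by omega), coeff_one_comp hφ0] at hℓ
      exact right_ne_zero_of_mul hℓ
    exact ⟨φ, hφdeg, hφ0, hφ1, fun ℓ j hj => X_pow_dvd_sub_iff.mp (hφ ℓ) j (by omega)⟩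
  · rintro ⟨φ, -, hφ0, hφ1, hφ⟩
    rw [← solutionSpace_comp hφ0 hφ1]
    exact solutionSpace_congr fun ℓ => X_pow_dvd_sub_iff.mpr fun j hj => (hφ ℓ j (by omega)).symm

/-- For `n ≥ 2`, `k ≥ 1` and regular `k`-jets `γ, δ` of curves in `ℂⁿ`,
the solution spaces `S_γ` and `S_δ` coincide if and only if `δ ≡ γ ∘ φ (mod t^{k+1})` for
some reparametrisation `k`-jet `φ`. In particular, `γ ↦ S_γ` induces an injective map on the
orbits of the reparametrisation group acting on regular `k`-jets of curves. -/
theorem solutionSpace_eq_iff_reparam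
    (n k : ℕ) (hn : 2 ≤ n) (hk : 1 ≤ k)
    (γ δ : Fin n → Polynomial ℂ)
    (hγdeg : ∀ i, (γ i).natDegree ≤ k) (hγ0 : ∀ i, (γ i).coeff 0 = 0)
    (hγreg : ∃ i, (γ i).coeff 1 ≠ 0)
    (hδdeg : ∀ i, (δ i).natDegree ≤ k) (hδ0 : ∀ i, (δ i).coeff 0 = 0)
    (hδreg : ∃ i, (δ i).coeff 1 ≠ 0) :
    solutionSpace n k γ = solutionSpace n k δ ↔
      ∃ φ : Polynomial ℂ, φ.natDegree ≤ k ∧ φ.coeff 0 = 0 ∧ φ.coeff 1 ≠ 0 ∧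
        ∀ i, ∀ j ≤ k, (δ i).coeff j = ((γ i).comp φ).coeff j :=
  solutionSpace_eq_iff_reparam_general n k hk γ δ hγ0 hγreg hδ0 hδreg
end

section
/- Let k, n, N ≥ 1. Let γ and δ be regular k-jets of curves in ℂⁿ, and let Ψ be a k-jet of a map (ℂⁿ,0)→(ℂᴺ,0) whose linear part Ψ¹ : ℂⁿ → ℂᴺ has one-dimensional kernel. If Ψ∘γ ≡ 0 (mod t^{k+1}) and Ψ∘δ ≡ 0 (mod t^{k+1}), then there exists a reparametrisation k-jet φ such that δ ≡ γ∘φ (mod t^{k+1}). -/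
open Polynomial

private lemma jet_dvd_sub {φ ψ : Polynomial ℂ} {j : ℕ}
    (h : ∀ l ≤ j, φ.coeff l = ψ.coeff l) : X ^ (j+1) ∣ φ - ψ := by
  rw [Polynomial.X_pow_dvd_iff]
  intro d hd
  simp [coeff_sub, h d (Nat.lt_succ_iff.mp hd)]

private lemma jet_coeff_eq_of_dvd {r : Polynomial ℂ} {m l : ℕ} (h : X ^ m ∣ r) (hl : l < m) :
    r.coeff l = 0 := (Polynomial.X_pow_dvd_iff.mp h) l hl

private lemma jet_coeff_mul_of_dvd (p : Polynomial ℂ) {q : Polynomial ℂ} {m : ℕ}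
    (h : X ^ m ∣ q) : (p * q).coeff m = p.coeff 0 * q.coeff m := by
  obtain ⟨s, rfl⟩ := h
  have h1 : p * (X ^ m * s) = X ^ m * (p * s) := by ring
  have h2 : ((X:ℂ[X]) ^ m * s).coeff m = s.coeff 0 := by
    simpa using Polynomial.coeff_X_pow_mul s m 0
  have h3 : ((X:ℂ[X]) ^ m * (p*s)).coeff m = (p*s).coeff 0 := by
    simpa using Polynomial.coeff_X_pow_mul (p*s) m 0
  rw [h1, h3, h2, Polynomial.mul_coeff_zero]

-- single variable key lemma
private lemma jet_comp_key (p : Polynomial ℂ) {φ ψ : Polynomial ℂ}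
    (hφ0 : φ.coeff 0 = 0) (hψ0 : ψ.coeff 0 = 0) {j : ℕ}
    (h : ∀ l ≤ j, φ.coeff l = ψ.coeff l) :
    (p.comp φ).coeff (j+1) = (p.comp ψ).coeff (j+1) + p.coeff 1 * (φ.coeff (j+1) - ψ.coeff (j+1)) := by
  have hdvd : X ^ (j+1) ∣ φ - ψ := jet_dvd_sub h
  have hXφ : (X:ℂ[X]) ∣ φ := Polynomial.X_dvd_iff.mpr hφ0
  have hXψ : (X:ℂ[X]) ∣ ψ := Polynomial.X_dvd_iff.mpr hψ0
  induction p using Polynomial.induction_on' with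
  | add p q hp hq =>
      simp only [add_comp, coeff_add, hp, hq, coeff_add]
      ring
  | monomial d a =>
      rw [← Polynomial.C_mul_X_pow_eq_monomial]
      simp only [mul_comp, C_comp, pow_comp, X_comp, coeff_C_mul, coeff_monomial]
      match d with
      | 0 => simp [Polynomial.coeff_one]
      | 1 => simp [Polynomial.coeff_X_one]; ring
      | (e+2) =>
          have hbig : X ^ (j+2) ∣ φ ^ (e+2) - ψ ^ (e+2) := by
            have h1 : φ ^ (e+2) - ψ ^ (e+2)
                = φ * (φ ^ (e+1) - ψ ^ (e+1)) + (φ - ψ) * ψ ^ (e+1) := by ring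
            rw [h1]
            apply dvd_add
            · have : X ^ (j+1) ∣ φ ^ (e+1) - ψ ^ (e+1) :=
                dvd_trans hdvd (sub_dvd_pow_sub_pow φ ψ (e+1))
              have := mul_dvd_mul hXφ this
              simpa [pow_succ, mul_comm, mul_left_comm, mul_assoc] using this
            · have hXp : (X:ℂ[X]) ∣ ψ ^ (e+1) := dvd_trans hXψ (dvd_pow_self ψ (Nat.succ_ne_zero e))
              have := mul_dvd_mul hdvd hXp
              simpa [pow_succ, mul_comm, mul_left_comm, mul_assoc] using this
          have heq : (φ ^ (e+2)).coeff (j+1) = (ψ ^ (e+2)).coeff (j+1) := by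
            have := jet_coeff_eq_of_dvd hbig (by omega : j+1 < j+2)
            rw [coeff_sub] at this
            exact sub_eq_zero.mp this
          simp [heq]
private lemma mv_dvd {n : ℕ} {γ δ : Fin n → Polynomial ℂ} {m : ℕ}
    (h : ∀ i, X ^ m ∣ (δ i - γ i)) (P : MvPolynomial (Fin n) ℂ) :
    X ^ m ∣ (MvPolynomial.aeval δ P - MvPolynomial.aeval γ P) := by
  induction P using MvPolynomial.induction_on with
  | C a => simp
  | add p q hp hq =>
      have := dvd_add hp hq
      convert this using 1
      simp only [map_add]; ring
  | mul_X p i hp =>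
      have key : MvPolynomial.aeval δ (p * MvPolynomial.X i)
          - MvPolynomial.aeval γ (p * MvPolynomial.X i)
          = (MvPolynomial.aeval δ p - MvPolynomial.aeval γ p) * δ i
            + MvPolynomial.aeval γ p * (δ i - γ i) := by
        simp only [map_mul, MvPolynomial.aeval_X]; ring
      rw [key]
      exact dvd_add (hp.mul_right _) ((h i).mul_left _)

private lemma mv_constcoeff {n : ℕ} {γ : Fin n → Polynomial ℂ}
    (hγ0 : ∀ i, (γ i).coeff 0 = 0) (P : MvPolynomial (Fin n) ℂ) :
    (MvPolynomial.aeval γ P).coeff 0 = MvPolynomial.coeff 0 P := by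
  induction P using MvPolynomial.induction_on with
  | C a => simp [Polynomial.coeff_C, MvPolynomial.coeff_C]
  | add p q hp hq => simp [hp, hq]
  | mul_X p i hp =>
      simp only [map_mul, MvPolynomial.aeval_X, Polynomial.mul_coeff_zero, hγ0 i, mul_zero]
      rw [MvPolynomial.coeff_mul_X']
      simp

private lemma mv_coeff_single_C {n : ℕ} (i : Fin n) (a : ℂ) :
    MvPolynomial.coeff (Finsupp.single i 1) (MvPolynomial.C a : MvPolynomial (Fin n) ℂ) = 0 := by
  rw [MvPolynomial.coeff_C, if_neg]
  intro hc
  have : (Finsupp.single i 1 : Fin n →₀ ℕ) ≠ 0 := by simp [Finsupp.single_eq_zero]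
  exact this hc.symm

private lemma mv_coeff_single_mul_X {n : ℕ} (p : MvPolynomial (Fin n) ℂ) (i i' : Fin n) :
    MvPolynomial.coeff (Finsupp.single i' 1) (p * MvPolynomial.X i)
      = if i' = i then MvPolynomial.coeff 0 p else 0 := by
  rw [MvPolynomial.coeff_mul_X']
  by_cases h : i' = i
  · subst h
    simp
  · simp [Finsupp.support_single_ne_zero, Finsupp.mem_support_iff, Finsupp.single_apply,
      Ne.symm h, h]

-- multivariable key lemma
private lemma mv_key {n : ℕ} {γ δ : Fin n → Polynomial ℂ}
    (hγ0 : ∀ i, (γ i).coeff 0 = 0) (hδ0 : ∀ i, (δ i).coeff 0 = 0) {j : ℕ}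
    (h : ∀ i, ∀ l ≤ j, (δ i).coeff l = (γ i).coeff l) (P : MvPolynomial (Fin n) ℂ) :
    (MvPolynomial.aeval δ P).coeff (j+1) = (MvPolynomial.aeval γ P).coeff (j+1)
      + ∑ i, MvPolynomial.coeff (Finsupp.single i 1) P * ((δ i).coeff (j+1) - (γ i).coeff (j+1)) := by
  have hdvd : ∀ i, X ^ (j+1) ∣ (δ i - γ i) := fun i => jet_dvd_sub (h i)
  induction P using MvPolynomial.induction_on with
  | C a =>
      rw [Finset.sum_eq_zero (fun x _ => by rw [mv_coeff_single_C, zero_mul])]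
      simp
  | add p q hp hq =>
      simp only [map_add, coeff_add, hp, hq, MvPolynomial.coeff_add, add_mul, Finset.sum_add_distrib]
      ring
  | mul_X p i hp =>
      have key : MvPolynomial.aeval δ (p * MvPolynomial.X i)
          = MvPolynomial.aeval γ (p * MvPolynomial.X i)
            + (MvPolynomial.aeval δ p - MvPolynomial.aeval γ p) * δ i
            + MvPolynomial.aeval γ p * (δ i - γ i) := by
        simp only [map_mul, MvPolynomial.aeval_X]; ring
      rw [key]
      have c1 : ((MvPolynomial.aeval δ p - MvPolynomial.aeval γ p) * δ i).coeff (j+1) = 0 := by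
        have hd : X ^ (j+2) ∣ (MvPolynomial.aeval δ p - MvPolynomial.aeval γ p) * δ i := by
          have h1 := mv_dvd hdvd p
          have h2 : (X:ℂ[X]) ∣ δ i := Polynomial.X_dvd_iff.mpr (hδ0 i)
          have := mul_dvd_mul h1 h2
          simpa [pow_succ] using this
        exact jet_coeff_eq_of_dvd hd (by omega)
      have c2 : (MvPolynomial.aeval γ p * (δ i - γ i)).coeff (j+1)
          = MvPolynomial.coeff 0 p * ((δ i).coeff (j+1) - (γ i).coeff (j+1)) := by
        rw [jet_coeff_mul_of_dvd _ (hdvd i), mv_constcoeff hγ0, coeff_sub]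
      rw [coeff_add, coeff_add, c1, c2, add_zero]
      congr 1
      rw [Finset.sum_congr rfl (fun i' _ => by rw [mv_coeff_single_mul_X])]
      simp only [ite_mul, zero_mul, Finset.sum_ite_eq', Finset.mem_univ, if_true]
private lemma jet_comp_dvd {φ ψ : Polynomial ℂ} {m : ℕ} (h : X ^ m ∣ φ - ψ)
    (p : Polynomial ℂ) : X ^ m ∣ p.comp φ - p.comp ψ := by
  induction p using Polynomial.induction_on' with
  | add p q hp hq =>
      have := dvd_add hp hq
      convert this using 1
      simp only [add_comp]; ring
  | monomial d a =>
      rw [← Polynomial.C_mul_X_pow_eq_monomial]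
      simp only [mul_comp, C_comp, pow_comp, X_comp, ← mul_sub]
      exact Dvd.dvd.mul_left (dvd_trans h (sub_dvd_pow_sub_pow φ ψ d)) _

private lemma jet_comp_coeff_zero {q φ : Polynomial ℂ} {k : ℕ}
    (hq : ∀ l ≤ k, q.coeff l = 0) (hφ : φ.coeff 0 = 0) {j : ℕ} (hj : j ≤ k) :
    (q.comp φ).coeff j = 0 := by
  rw [Polynomial.comp_eq_sum_left, Polynomial.sum_def, Polynomial.finset_sum_coeff]
  apply Finset.sum_eq_zero
  intro d hd
  rcases le_or_gt d k with hdk | hdk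
  · rw [hq d hdk]; simp
  · rw [coeff_C_mul]
    have hXφ : (X:ℂ[X]) ∣ φ := Polynomial.X_dvd_iff.mpr hφ
    have : X ^ d ∣ φ ^ d := pow_dvd_pow_of_dvd hXφ d
    rw [jet_coeff_eq_of_dvd this (by omega), mul_zero]

private lemma jet_comp_coeff0 {p φ : Polynomial ℂ} (hφ : φ.coeff 0 = 0) :
    (p.comp φ).coeff 0 = p.coeff 0 := by
  rw [Polynomial.coeff_zero_eq_eval_zero, Polynomial.eval_comp,
    ← Polynomial.coeff_zero_eq_eval_zero, hφ, ← Polynomial.coeff_zero_eq_eval_zero,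
    Polynomial.coeff_zero_eq_eval_zero]

private lemma mv_aeval_comp {n : ℕ} (γ : Fin n → Polynomial ℂ) (φ : Polynomial ℂ)
    (P : MvPolynomial (Fin n) ℂ) :
    MvPolynomial.aeval (fun i => (γ i).comp φ) P = (MvPolynomial.aeval γ P).comp φ := by
  have hc : ∀ p : Polynomial ℂ, p.comp φ = Polynomial.aeval φ p := by
    intro p; simp [Polynomial.aeval_def, Polynomial.comp]
  rw [hc]
  have := MvPolynomial.comp_aeval γ (Polynomial.aeval φ : Polynomial ℂ →ₐ[ℂ] Polynomial ℂ)
  have h2 := congrFun (congrArg DFunLike.coe this) P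
  simp only [AlgHom.coe_comp, Function.comp_apply] at h2
  simp only [hc]
  exact h2.symm

/-- Let `γ, δ` be regular `k`-jets of curves in `ℂⁿ` and let `Ψ` be a
`k`-jet of a map `(ℂⁿ,0) → (ℂᴺ,0)` whose linear part `Ψ¹ : ℂⁿ → ℂᴺ` has one-dimensional
kernel. If `Ψ ∘ γ ≡ 0` and `Ψ ∘ δ ≡ 0 (mod t^{k+1})`, then there is a reparametrisation
`k`-jet `φ` with `δ ≡ γ ∘ φ (mod t^{k+1})`. -/
theorem test_curves_related_by_reparam
    (k n N : ℕ) (hk : 1 ≤ k) (hn : 1 ≤ n) (hN : 1 ≤ N)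
    (γ δ : Fin n → Polynomial ℂ)
    (hγdeg : ∀ i, (γ i).natDegree ≤ k) (hγ0 : ∀ i, (γ i).coeff 0 = 0)
    (hγreg : ∃ i, (γ i).coeff 1 ≠ 0)
    (hδdeg : ∀ i, (δ i).natDegree ≤ k) (hδ0 : ∀ i, (δ i).coeff 0 = 0)
    (hδreg : ∃ i, (δ i).coeff 1 ≠ 0)
    (Ψ : Fin N → MvPolynomial (Fin n) ℂ)
    (hΨdeg : ∀ m, (Ψ m).totalDegree ≤ k)
    (hΨ0 : ∀ m, MvPolynomial.coeff 0 (Ψ m) = 0)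
    (hker : Module.finrank ℂ
        (LinearMap.ker (Matrix.mulVecLin
          (Matrix.of fun (m : Fin N) (i : Fin n) =>
            MvPolynomial.coeff (Finsupp.single i 1) (Ψ m)))) = 1)
    (hγΨ : ∀ m : Fin N, ∀ j ≤ k, (MvPolynomial.aeval γ (Ψ m)).coeff j = 0)
    (hδΨ : ∀ m : Fin N, ∀ j ≤ k, (MvPolynomial.aeval δ (Ψ m)).coeff j = 0) :
    ∃ φ : Polynomial ℂ, φ.natDegree ≤ k ∧ φ.coeff 0 = 0 ∧ φ.coeff 1 ≠ 0 ∧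
      ∀ i, ∀ j ≤ k, (δ i).coeff j = ((γ i).comp φ).coeff j := by
  classical
  set A : Matrix (Fin N) (Fin n) ℂ :=
    Matrix.of fun (m : Fin N) (i : Fin n) => MvPolynomial.coeff (Finsupp.single i 1) (Ψ m) with hA
  set K := LinearMap.ker A.mulVecLin with hK
  set γ₁ : Fin n → ℂ := fun i => (γ i).coeff 1 with hγ₁
  set δ₁ : Fin n → ℂ := fun i => (δ i).coeff 1 with hδ₁
  -- membership of linear coefficient vectors in the kernel
  have hmem : ∀ (η : Fin n → Polynomial ℂ), (∀ i, (η i).coeff 0 = 0) →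
      (∀ m : Fin N, (MvPolynomial.aeval η (Ψ m)).coeff 1 = 0) →
      (fun i => (η i).coeff 1) ∈ K := by
    intro η hη0 hηΨ
    rw [hK, LinearMap.mem_ker]
    funext m
    rw [Matrix.mulVecLin_apply]
    have hkey := mv_key (γ := fun _ => (0 : Polynomial ℂ)) (δ := η)
      (fun i => rfl) hη0 (j := 0)
      (fun i l hl => by interval_cases l; simp [hη0 i]) (Ψ m)
    have hz : (MvPolynomial.aeval (fun _ : Fin n => (0 : Polynomial ℂ)) (Ψ m)).coeff 1 = 0 := by
      rw [MvPolynomial.aeval_zero']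
      simp [Polynomial.coeff_C]
    rw [hηΨ m, hz, zero_add] at hkey
    have : A.mulVec (fun i => (η i).coeff 1) m
        = ∑ i, A m i * (η i).coeff 1 := by
      simp [Matrix.mulVec, dotProduct]
    rw [this]
    have := hkey.symm
    simpa [hA] using this
  have hγmem : γ₁ ∈ K := hmem γ hγ0 (fun m => hγΨ m 1 hk)
  have hδmem : δ₁ ∈ K := hmem δ hδ0 (fun m => hδΨ m 1 hk)
  have hγ₁ne : γ₁ ≠ 0 := by
    obtain ⟨i, hi⟩ := hγreg
    intro h
    exact hi (by rw [hγ₁] at h; exact congrFun h i)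
  -- every kernel element is a multiple of γ₁
  have hspan : ∀ w ∈ K, ∃ a : ℂ, w = a • γ₁ := by
    intro w hw
    have hvne : (⟨γ₁, hγmem⟩ : K) ≠ 0 := by
      intro h
      exact hγ₁ne (congrArg Subtype.val h)
    have htop := (finrank_eq_one_iff_of_nonzero (⟨γ₁, hγmem⟩ : K) hvne).mp hker
    have : (⟨w, hw⟩ : K) ∈ Submodule.span ℂ {(⟨γ₁, hγmem⟩ : K)} := by
      rw [htop]; trivial
    obtain ⟨a, ha⟩ := Submodule.mem_span_singleton.mp this
    refine ⟨a, ?_⟩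
    have := congrArg Subtype.val ha
    simp only [Submodule.coe_smul] at this
    exact this.symm
  obtain ⟨c, hc⟩ := hspan δ₁ hδmem
  have hcne : c ≠ 0 := by
    obtain ⟨i, hi⟩ := hδreg
    intro h
    apply hi
    have := congrFun hc i
    simpa [h] using this
  -- inductive construction of φ
  have main : ∀ j : ℕ, 1 ≤ j → j ≤ k →
      ∃ φ : Polynomial ℂ, φ.natDegree ≤ k ∧ φ.coeff 0 = 0 ∧ φ.coeff 1 = c ∧
        ∀ i, ∀ l ≤ j, (δ i).coeff l = ((γ i).comp φ).coeff l := by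
    intro j hj1 hjk
    induction j, hj1 using Nat.le_induction with
    | base =>
        refine ⟨Polynomial.C c * X, ?_, ?_, ?_, ?_⟩
        · calc (Polynomial.C c * X).natDegree ≤ 1 := by
                simpa using Polynomial.natDegree_C_mul_X_pow_le c 1
            _ ≤ k := hk
        · simp
        · simp
        · intro i l hl
          interval_cases l
          · rw [jet_comp_coeff0 (by simp), hγ0 i, hδ0 i]
          · have hkey := jet_comp_key (γ i) (φ := Polynomial.C c * X) (ψ := 0)
              (by simp) (by simp) (j := 0) (fun l hl => by interval_cases l; simp)
            rw [hkey]
            have h0 : ((γ i).comp 0).coeff 1 = 0 := by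
              rw [Polynomial.comp_zero]
              simp [Polynomial.coeff_C]
            rw [h0, zero_add]
            have hδc : (δ i).coeff 1 = c * γ₁ i := by
              have := congrFun hc i
              simpa using this
            rw [hδc]
            simp [hγ₁]
            ring
    | succ j hj1 ih =>
        obtain ⟨φ, hφdeg, hφ0, hφ1, hφag⟩ := ih (by omega)
        set η : Fin n → Polynomial ℂ := fun i => (γ i).comp φ with hη
        have hη0 : ∀ i, (η i).coeff 0 = 0 := fun i => by
          rw [hη]; exact (jet_comp_coeff0 hφ0).trans (hγ0 i)
        have hagree : ∀ i, ∀ l ≤ j, (δ i).coeff l = (η i).coeff l := fun i l hl =>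
          hφag i l hl
        set v : Fin n → ℂ := fun i => (δ i).coeff (j+1) - (η i).coeff (j+1) with hv
        have hvker : v ∈ K := by
          rw [hK, LinearMap.mem_ker]
          funext m
          rw [Matrix.mulVecLin_apply]
          have hkey := mv_key hη0 hδ0 hagree (Ψ m)
          have hl1 : (MvPolynomial.aeval δ (Ψ m)).coeff (j+1) = 0 := hδΨ m (j+1) hjk
          have hl2 : (MvPolynomial.aeval η (Ψ m)).coeff (j+1) = 0 := by
            rw [hη, mv_aeval_comp]
            exact jet_comp_coeff_zero (hγΨ m) hφ0 hjk
          rw [hl1, hl2, zero_add] at hkey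
          have : A.mulVec v m = ∑ i, A m i * v i := by
            simp [Matrix.mulVec, dotProduct]
          rw [this]
          have := hkey.symm
          simpa [hA, hv] using this
        obtain ⟨ε, hε⟩ := hspan v hvker
        refine ⟨φ + Polynomial.C ε * X ^ (j+1), ?_, ?_, ?_, ?_⟩
        · apply le_trans (Polynomial.natDegree_add_le _ _)
          apply max_le hφdeg
          exact le_trans (Polynomial.natDegree_C_mul_X_pow_le ε (j+1)) hjk
        · rw [Polynomial.coeff_add, hφ0, Polynomial.coeff_C_mul, Polynomial.coeff_X_pow]
          simp
        · rw [Polynomial.coeff_add, hφ1, Polynomial.coeff_C_mul, Polynomial.coeff_X_pow,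
            if_neg (by omega : ¬ (1 = j + 1))]
          simp
        · have hcoeffagree : ∀ l ≤ j, (φ + Polynomial.C ε * X ^ (j+1)).coeff l = φ.coeff l := by
            intro l hl
            rw [Polynomial.coeff_add, Polynomial.coeff_C_mul, Polynomial.coeff_X_pow]
            have : l ≠ j + 1 := by omega
            simp [if_neg this]
          have hφ'0 : (φ + Polynomial.C ε * X ^ (j+1)).coeff 0 = 0 := by
            rw [hcoeffagree 0 (by omega), hφ0]
          intro i l hl
          rcases Nat.lt_or_ge l (j+1) with hlj | hlj
          · -- l ≤ j
            have hl' : l ≤ j := by omega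
            rw [hφag i l hl']
            have hdvd : X ^ (j+1) ∣ (γ i).comp (φ + Polynomial.C ε * X ^ (j+1)) - (γ i).comp φ :=
              jet_comp_dvd (jet_dvd_sub hcoeffagree) (γ i)
            have := jet_coeff_eq_of_dvd hdvd (by omega : l < j+1)
            rw [Polynomial.coeff_sub] at this
            exact (sub_eq_zero.mp this).symm
          · -- l = j+1
            have hl' : l = j + 1 := by omega
            subst hl'
            have hkey := jet_comp_key (γ i) (φ := φ + Polynomial.C ε * X ^ (j+1)) (ψ := φ)
              hφ'0 hφ0 hcoeffagree
            rw [hkey]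
            have hco : (φ + Polynomial.C ε * X ^ (j+1)).coeff (j+1) - φ.coeff (j+1) = ε := by
              rw [Polynomial.coeff_add, Polynomial.coeff_C_mul, Polynomial.coeff_X_pow]
              simp
            rw [hco]
            have hvi : (δ i).coeff (j+1) = (η i).coeff (j+1) + ε * γ₁ i := by
              have := congrFun hε i
              rw [hv] at this
              simp only [Pi.smul_apply, smul_eq_mul] at this
              have h2 : (δ i).coeff (j+1) - (η i).coeff (j+1) = ε * γ₁ i := this
              linear_combination h2
            rw [hvi]
            rw [hη, hγ₁]
            ring
  obtain ⟨φ, h1, h2, h3, h4⟩ := main k hk le_rfl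
  exact ⟨φ, h1, h2, by rw [h3]; exact hcne, h4⟩
end

section
/- Let 1 ≤ k ≤ n, let λ₁,…,λₙ be distinct complex numbers, and let Q be a polynomial in k variables. Then the sum over all injective maps σ : {1,…,k} → {1,…,n} of Q(λ_{σ(1)},…,λ_{σ(k)}) divided by ∏_{m=1}^{k} [ ∏_{l=m+1}^{k} (λ_{σ(l)} − λ_{σ(m)}) · ∏_{j ∉ σ({1,…,k})} (λ_j − λ_{σ(m)}) ] equals the iterated residue at infinity Res_{z₁=∞}⋯Res_{z_k=∞} of the form ∏_{1≤m<l≤k}(z_m − z_l) · Q(z₁,…,z_k) dz₁⋯dz_k / ∏_{l=1}^{k} ∏_{i=1}^{n} (λ_i − z_l). Concretely, the iterated residue here equals (−1)^k (2πi)^{−k} times the nested counterclockwise contour integrals over the circles |z_l| = R_l, l = 1,…,k, for any radii R₁,…,R_k all strictly larger than max_i |λ_i|. -/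
/-!
For a polynomial `P` and distinct nodes `λᵢ` inside the circle, the remainder of `P` modulo
`∏ᵢ (z - λᵢ)` is its Lagrange interpolant, so partial fractions give
`∮ P(z) / ∏ᵢ (λᵢ - z) dz = -2πi ∑ⱼ P(λⱼ) / ∏_{i ≠ j} (λᵢ - λⱼ)`.
The inner integrals of a polynomial integrand are again a polynomial in the outer variable
divided by `∏ᵢ (λᵢ - z₁)`, so by induction on `k` the nested integral is `(-2πi)^k` times the
sum, over all maps `t : {1,…,k} → {1,…,n}`, of `N(λ ∘ t) / ∏_l ∏_{i ≠ t l} (λᵢ - λ_{t l})`,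
where `N = ∏_{m<l} (z_m - z_l) · Q`. The Vandermonde factor of `N` kills the non-injective `t`;
for an injective `t = σ` it cancels the factors with `l < m` of the denominator, which leaves
the localisation summand.
-/

open Polynomial

/-- The nested contour integral `∮_{|z₁|=R₁} ⋯ ∮_{|z_k|=R_k} f(z₁,…,z_k) dz_k ⋯ dz₁`
over circles centred at the origin: the outermost integral is over `z₁` (index `0`). -/
noncomputable def iterCircleInt : (k : ℕ) → ((Fin k → ℂ) → ℂ) → (Fin k → ℝ) → ℂ
  | 0, f, _ => f (fun i => i.elim0)
  | (k + 1), f, R =>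
    ∮ z in C(0, R 0), iterCircleInt k (fun w => f (Fin.cons z w)) (fun i => R i.succ)

open Finset Metric Lagrange

namespace circleIntegral

variable {E : Type*} [NormedAddCommGroup E] [NormedSpace ℂ E] {c : ℂ} {R : ℝ}

theorem integral_congr_sphere_abs {f g : ℂ → E} (h : Set.EqOn f g (sphere c |R|)) :
    (∮ z in C(c, R), f z) = ∮ z in C(c, R), g z :=
  intervalIntegral.integral_congr fun θ _ => by simp only [h (circleMap_mem_sphere' c R θ)]

theorem integral_eval_polynomial (P : ℂ[X]) (c : ℂ) (R : ℝ) :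
    (∮ z in C(c, R), P.eval z) = 0 := by
  induction P using Polynomial.induction_on' with
  | add p q hp hq =>
    simp only [eval_add]
    rw [integral_add p.continuous.continuousOn.circleIntegrable'
      q.continuous.continuousOn.circleIntegrable', hp, hq, add_zero]
  | monomial n a =>
    have h := integral_sub_zpow_of_ne (n := n) (by omega) c 0 R
    simp only [sub_zero, zpow_natCast] at h
    simp only [eval_monomial, integral_const_mul, h, mul_zero]

end circleIntegral

namespace Lagrange

variable {F ι : Type*} [Field F] [DecidableEq ι] {s : Finset ι} {v : ι → F}

theorem modByMonic_nodal_eq_interpolate (hvs : Set.InjOn v s) (P : F[X]) :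
    P %ₘ nodal s v = interpolate s v fun i => P.eval (v i) := by
  refine eq_interpolate_of_eval_eq _ hvs (degree_nodal (s := s) (v := v) ▸
    degree_modByMonic_lt P nodal_monic) fun i hi => ?_
  rw [modByMonic_eq_sub_mul_div P (nodal s v), eval_sub, eval_mul, eval_nodal_at_node hi,
    zero_mul, sub_zero]

theorem eval_div_eval_nodal (hvs : Set.InjOn v s) (P : F[X]) {x : F} (hx : ∀ i ∈ s, x ≠ v i) :
    P.eval x / (nodal s v).eval x =
      (P /ₘ nodal s v).eval x + ∑ i ∈ s, nodalWeight s v i * (x - v i)⁻¹ * P.eval (v i) := by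
  conv_lhs => rw [← modByMonic_add_div P (nodal s v)]
  rw [eval_add, eval_mul, modByMonic_nodal_eq_interpolate hvs, eval_interpolate_not_at_node _ hx,
    ← mul_add, mul_div_cancel_left₀ _ (eval_nodal_not_at_node hx), add_comm]

end Lagrange

open Real Complex in
theorem circleIntegral_eval_div_eval_nodal {ι : Type*} [DecidableEq ι] {s : Finset ι}
    {v : ι → ℂ} (hvs : Set.InjOn v s) (P : ℂ[X]) {c : ℂ} {R : ℝ}
    (hR : ∀ i ∈ s, v i ∈ ball c R) :
    (∮ z in C(c, R), P.eval z / (nodal s v).eval z) =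
      2 * π * I * ∑ i ∈ s, nodalWeight s v i * P.eval (v i) := by
  have hne : ∀ z ∈ sphere c |R|, ∀ i ∈ s, z ≠ v i := by
    rintro z hz i hi rfl
    have := hR i hi
    rw [mem_sphere] at hz
    rw [mem_ball, hz] at this
    exact (le_abs_self R).not_gt this
  have hinv : ∀ i ∈ s, ContinuousOn (fun z => (z - v i)⁻¹) (sphere c |R|) := fun i hi =>
    (continuousOn_id.sub continuousOn_const).inv₀ fun z hz => sub_ne_zero.2 (hne z hz i hi)
  have hterm : ∀ i ∈ s, ContinuousOn
      (fun z => nodalWeight s v i * (z - v i)⁻¹ * P.eval (v i)) (sphere c |R|) := fun i hi =>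
    (continuousOn_const.mul (hinv i hi)).mul continuousOn_const
  rw [circleIntegral.integral_congr_sphere_abs fun z hz => eval_div_eval_nodal hvs P (hne z hz),
    circleIntegral.integral_add (P /ₘ nodal s v).continuous.continuousOn.circleIntegrable'
      (continuousOn_finsetSum s hterm).circleIntegrable',
    circleIntegral.integral_eval_polynomial, zero_add,
    circleIntegral.integral_fun_sum fun i hi => (hterm i hi).circleIntegrable', mul_sum]
  refine sum_congr rfl fun i hi => ?_
  simp_rw [mul_right_comm _ _ (P.eval (v i))]
  rw [circleIntegral.integral_const_mul, circleIntegral.integral_sub_inv_of_mem_ball (hR i hi)]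
  ring

theorem prod_sub_comm {ι R : Type*} [CommRing R] (s : Finset ι) (a : ι → R) (b : R) :
    ∏ i ∈ s, (b - a i) = (-1) ^ #s * ∏ i ∈ s, (a i - b) := by
  rw [← prod_neg]; simp only [neg_sub]

theorem neg_one_pow_card_mul_nodalWeight {F ι : Type*} [Field F] [DecidableEq ι]
    {s : Finset ι} {v : ι → F} {j : ι} (hj : j ∈ s) :
    (-1) ^ #s * nodalWeight s v j = -(∏ i ∈ s.erase j, (v i - v j))⁻¹ := by
  rw [nodalWeight, prod_inv_distrib, prod_sub_comm, ← card_erase_add_one hj, mul_inv,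
    ← mul_assoc, pow_succ]
  field_simp

open Real Complex in
theorem circleIntegral_eval_div_prod_sub {ι : Type*} [DecidableEq ι] {s : Finset ι}
    {v : ι → ℂ} (hvs : Set.InjOn v s) (P : ℂ[X]) {c : ℂ} {R : ℝ}
    (hR : ∀ i ∈ s, v i ∈ ball c R) :
    (∮ z in C(c, R), P.eval z / ∏ i ∈ s, (v i - z)) =
      -(2 * π * I) * ∑ j ∈ s, P.eval (v j) / ∏ i ∈ s.erase j, (v i - v j) := by
  have hflip : ∀ z, P.eval z / ∏ i ∈ s, (v i - z) =
      (-1) ^ #s * (P.eval z / (nodal s v).eval z) := by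
    intro z
    rw [eval_nodal, prod_sub_comm s v z, mul_div_assoc',
      mul_div_mul_left _ _ (pow_ne_zero _ (neg_ne_zero.2 one_ne_zero))]
  simp_rw [hflip]
  rw [circleIntegral.integral_const_mul, circleIntegral_eval_div_eval_nodal hvs P hR, mul_sum,
    mul_sum, mul_sum]
  refine sum_congr rfl fun j hj => ?_
  linear_combination (2 * π * I * P.eval (v j)) * neg_one_pow_card_mul_nodalWeight (v := v) hj

theorem MvPolynomial.eval_polynomialEval_C_finSuccEquiv {R : Type*} [CommRing R] {n : ℕ}
    (N : MvPolynomial (Fin (n + 1)) R) (y : R) (s : Fin n → R) :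
    MvPolynomial.eval s ((finSuccEquiv R n N).eval (MvPolynomial.C y)) =
      MvPolynomial.eval (Fin.cons y s) N := by
  rw [eval_eq_eval_mv_eval', Polynomial.eval_map, ← Polynomial.eval₂_at_apply, eval_C]

theorem Fintype.sum_fun_fin_succ {ι M : Type*} [Fintype ι] [AddCommMonoid M] (k : ℕ)
    (g : (Fin (k + 1) → ι) → M) :
    ∑ t, g t = ∑ j, ∑ t : Fin k → ι, g (Fin.cons j t) := by
  rw [← (Fin.consEquiv fun _ => ι).sum_comp, Fintype.sum_prod_type]
  rfl

theorem iterCircleInt_const_mul (k : ℕ) (a : ℂ) (f : (Fin k → ℂ) → ℂ) (R : Fin k → ℝ) :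
    iterCircleInt k (fun z => a * f z) R = a * iterCircleInt k f R := by
  induction k with
  | zero => rfl
  | succ k ih =>
    simp only [iterCircleInt, ih]
    exact circleIntegral.integral_const_mul _ _ _ _

theorem eval_cons_div_prod_prod_sub {ι : Type*} [Fintype ι] (v : ι → ℂ) {k : ℕ}
    (N : MvPolynomial (Fin (k + 1)) ℂ) (z : ℂ) (w : Fin k → ℂ) :
    MvPolynomial.eval (Fin.cons z w) N /
        ∏ l : Fin (k + 1), ∏ i, (v i - (Fin.cons z w : Fin (k + 1) → ℂ) l) =
      (∏ i, (v i - z))⁻¹ * (MvPolynomial.eval w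
        ((MvPolynomial.finSuccEquiv ℂ k N).eval (MvPolynomial.C z)) / ∏ l, ∏ i, (v i - w l)) := by
  rw [Fin.prod_univ_succ, MvPolynomial.eval_polynomialEval_C_finSuccEquiv]
  simp only [Fin.cons_zero, Fin.cons_succ]
  ring

open Real Complex in
theorem iterCircleInt_eval_div_prod_prod_sub {ι : Type*} [Fintype ι] [DecidableEq ι]
    {v : ι → ℂ} (hv : Function.Injective v) (k : ℕ) (N : MvPolynomial (Fin k) ℂ)
    (R : Fin k → ℝ) (hR : ∀ i l, ‖v i‖ < R l) :
    iterCircleInt k (fun z => MvPolynomial.eval z N / ∏ l, ∏ i, (v i - z l)) R =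
      (-(2 * π * I)) ^ k * ∑ t : Fin k → ι,
        MvPolynomial.eval (v ∘ t) N / ∏ l, ∏ i ∈ univ.erase (t l), (v i - v (t l)) := by
  set ρ : ι → ℂ := fun j => ∏ i ∈ univ.erase j, (v i - v j)
  induction k with
  | zero => simp [iterCircleInt, Subsingleton.elim (v ∘ _) Fin.elim0]
  | succ k ih =>
    set P : ℂ[X] := ∑ t : Fin k → ι,
      C (∏ l, ρ (t l))⁻¹ * (MvPolynomial.finSuccEquiv ℂ k N).map (MvPolynomial.eval (v ∘ t))
    have hP : ∀ z, P.eval z =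
        ∑ t : Fin k → ι, MvPolynomial.eval (Fin.cons z (v ∘ t)) N / ∏ l, ρ (t l) := by
      intro z
      simp only [P, eval_finsetSum, eval_mul, eval_C, ← MvPolynomial.eval_eq_eval_mv_eval',
        div_eq_inv_mul]
    have hinner : ∀ z, iterCircleInt k (fun w => MvPolynomial.eval (Fin.cons z w) N /
          ∏ l : Fin (k + 1), ∏ i, (v i - (Fin.cons z w : Fin (k + 1) → ℂ) l)) (fun l => R l.succ) =
        (-(2 * π * I)) ^ k * (P.eval z / ∏ i, (v i - z)) := by
      intro z
      simp only [eval_cons_div_prod_prod_sub]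
      rw [iterCircleInt_const_mul, ih _ _ fun i l => hR i l.succ, hP]
      simp only [MvPolynomial.eval_polynomialEval_C_finSuccEquiv, ρ]
      ring
    simp only [iterCircleInt, hinner]
    rw [circleIntegral.integral_const_mul, circleIntegral_eval_div_prod_sub hv.injOn P
      fun i _ => mem_ball_zero_iff.2 (hR i 0), Fintype.sum_fun_fin_succ, pow_succ,
      mul_assoc ((-(2 * π * I)) ^ k)]
    congr 2
    refine sum_congr rfl fun j _ => ?_
    simp only [hP, ρ, sum_div, Fin.prod_univ_succ, Fin.cons_zero, Fin.cons_succ, Fin.comp_cons,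
      div_div, mul_comm]

theorem prod_prod_lt_sub_eq_zero_iff {α R : Type*} [Fintype α] [LinearOrder α] [CommRing R]
    [IsDomain R] (a : α → R) :
    ∏ m, ∏ l ∈ univ.filter (m < ·), (a m - a l) = 0 ↔ ¬ Function.Injective a := by
  simp only [prod_eq_zero_iff, mem_filter, mem_univ, true_and, sub_eq_zero,
    Function.Injective, not_forall, exists_prop]
  constructor
  · rintro ⟨m, l, hml, h⟩
    exact ⟨m, l, h, hml.ne⟩
  · rintro ⟨m, l, h, hml⟩
    rcases Ne.lt_or_gt hml with hml | hml
    exacts [⟨m, l, hml, h⟩, ⟨l, m, hml, h.symm⟩]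

theorem prod_erase_eq_prod_erase_map_mul_prod_sdiff_map {α β M : Type*} [Fintype α] [Fintype β]
    [DecidableEq α] [DecidableEq β] [CommMonoid M] (σ : α ↪ β) (f : β → M) (m : α) :
    ∏ i ∈ univ.erase (σ m), f i =
      (∏ l ∈ univ.erase m, f (σ l)) * ∏ j ∈ univ \ univ.map σ, f j := by
  have hsub : (univ.erase m).map σ ⊆ univ.erase (σ m) := by
    rw [map_erase]
    exact erase_subset_erase _ (subset_univ _)
  rw [← prod_sdiff hsub, prod_map, mul_comm]
  congr 2
  ext j
  by_cases hj : j = σ m <;> simp [hj]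

theorem prod_prod_ne_eq_mul_prod_prod_lt {α M : Type*} [Fintype α] [LinearOrder α] [CommMonoid M]
    (g : α → α → M) :
    ∏ m, ∏ l ∈ univ.erase m, g l m =
      (∏ m, ∏ l ∈ univ.filter (m < ·), g l m) * ∏ m, ∏ l ∈ univ.filter (m < ·), g m l := by
  have hsplit : ∀ m : α, univ.erase m = univ.filter (m < ·) ∪ univ.filter (· < m) := by
    intro m; ext l
    simp only [mem_erase, mem_univ, and_true, mem_union, mem_filter, true_and]
    rw [ne_comm]
    exact lt_or_lt_iff_ne.symm
  simp_rw [hsplit, prod_union (disjoint_filter.2 fun _ _ h h' => lt_asymm h h'),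
    prod_mul_distrib]
  congr 1
  exact prod_comm' fun m l => by simp [and_comm]

theorem Fintype.sum_fun_eq_sum_embedding {α β M : Type*} [Fintype α] [Fintype β] [DecidableEq α]
    [DecidableEq β] [AddCommMonoid M] (g : (α → β) → M)
    (hg : ∀ t, ¬ Function.Injective t → g t = 0) :
    ∑ t, g t = ∑ σ : α ↪ β, g σ := by
  calc ∑ t, g t = ∑ t ∈ univ.map ⟨_, DFunLike.coe_injective⟩, g t :=
        (Finset.sum_subset (subset_univ _) fun t _ ht =>
          hg t fun hinj => ht (mem_map.2 ⟨⟨t, hinj⟩, mem_univ _, rfl⟩)).symm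
    _ = ∑ σ : α ↪ β, g σ := sum_map _ _ _

theorem prod_prod_lt_sub_mul_div_prod_prod_erase {α ι K : Type*} [Fintype α] [LinearOrder α]
    [Fintype ι] [DecidableEq ι] [Field K] {v : ι → K}
    (hv : Function.Injective v) (σ : α ↪ ι) (q : K) :
    (∏ m, ∏ l ∈ univ.filter (m < ·), (v (σ m) - v (σ l))) * q /
        ∏ m, ∏ i ∈ univ.erase (σ m), (v i - v (σ m)) =
      q / ∏ m, ((∏ l ∈ univ.filter (m < ·), (v (σ l) - v (σ m))) *
        ∏ j ∈ univ \ univ.map σ, (v j - v (σ m))) := by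
  have hV : ∏ m, ∏ l ∈ univ.filter (m < ·), (v (σ m) - v (σ l)) ≠ 0 :=
    (prod_prod_lt_sub_eq_zero_iff (v ∘ σ)).not.2 (not_not.2 (hv.comp σ.injective))
  have hden : ∏ m, ∏ i ∈ univ.erase (σ m), (v i - v (σ m)) =
      (∏ m, ∏ l ∈ univ.filter (m < ·), (v (σ m) - v (σ l))) *
        ∏ m, ((∏ l ∈ univ.filter (m < ·), (v (σ l) - v (σ m))) *
          ∏ j ∈ univ \ univ.map σ, (v j - v (σ m))) := by
    rw [prod_congr rfl fun m _ =>
        prod_erase_eq_prod_erase_map_mul_prod_sdiff_map σ (fun i => v i - v (σ m)) m,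
      prod_mul_distrib, prod_prod_ne_eq_mul_prod_prod_lt fun l m => v (σ l) - v (σ m),
      prod_mul_distrib]
    ring
  rw [hden, mul_div_mul_left _ _ hV]

open Real Complex in
theorem localisation_sum_eq_iterated_residue_general
    (k n : ℕ)
    (lam : Fin n → ℂ) (hlam : Function.Injective lam)
    (Q : MvPolynomial (Fin k) ℂ)
    (R : Fin k → ℝ) (hR : ∀ (i : Fin n) (l : Fin k), ‖lam i‖ < R l) :
    ∑ σ : Fin k ↪ Fin n,
      MvPolynomial.eval (fun m => lam (σ m)) Q /
        (∏ m : Fin k,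
          ((∏ l ∈ Finset.univ.filter (fun l : Fin k => m < l), (lam (σ l) - lam (σ m))) *
            (∏ j ∈ Finset.univ \ Finset.univ.map σ, (lam j - lam (σ m)))))
      = (-1) ^ k * ((2 * (Real.pi : ℂ) * Complex.I)⁻¹) ^ k *
        iterCircleInt k
          (fun z =>
            (∏ m : Fin k, ∏ l ∈ Finset.univ.filter (fun l : Fin k => m < l), (z m - z l)) *
              MvPolynomial.eval z Q /
              ∏ l : Fin k, ∏ i : Fin n, (lam i - z l))
          R := by
  set N : MvPolynomial (Fin k) ℂ :=
    (∏ m, ∏ l ∈ univ.filter (m < ·), (MvPolynomial.X m - MvPolynomial.X l)) * Q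
  have hN : ∀ z, MvPolynomial.eval z N =
      (∏ m, ∏ l ∈ univ.filter (m < ·), (z m - z l)) * MvPolynomial.eval z Q := by
    simp [N]
  have hconst : (-1) ^ k * (2 * (π : ℂ) * I)⁻¹ ^ k * (-(2 * π * I)) ^ k = 1 := by
    rw [← mul_pow, ← mul_pow]
    field_simp
    simp
  simp_rw [← hN]
  rw [iterCircleInt_eval_div_prod_prod_sub hlam k N R hR, ← mul_assoc, hconst, one_mul,
    Fintype.sum_fun_eq_sum_embedding]
  · refine sum_congr rfl fun σ _ => ?_
    rw [hN]
    exact (prod_prod_lt_sub_mul_div_prod_prod_erase hlam σ _).symm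
  · intro t ht
    rw [hN, (prod_prod_lt_sub_eq_zero_iff (lam ∘ t)).2 fun h => ht h.of_comp, zero_mul,
      zero_div]

/-- For `1 ≤ k ≤ n`, distinct `λ₁,…,λₙ ∈ ℂ` and a polynomial `Q` in `k`
variables, the localisation sum over injective maps `σ : {1,…,k} → {1,…,n}` of
`Q(λ_{σ(1)},…,λ_{σ(k)}) / ∏_{m=1}^k [∏_{l>m}(λ_{σ(l)}−λ_{σ(m)}) ∏_{j∉im σ}(λ_j−λ_{σ(m)})]`
equals the iterated residue at infinity
`Res_{z₁=∞}⋯Res_{z_k=∞} ∏_{m<l}(z_m−z_l) Q(z) dz / ∏_{l}∏_{i}(λ_i−z_l)`, i.e.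
`(−1)^k (2πi)^{−k}` times the nested contour integrals over circles `|z_l| = R_l` for any
radii all strictly larger than `max_i |λ_i|`. -/
theorem localisation_sum_eq_iterated_residue
    (k n : ℕ) (hk : 1 ≤ k) (hkn : k ≤ n)
    (lam : Fin n → ℂ) (hlam : Function.Injective lam)
    (Q : MvPolynomial (Fin k) ℂ)
    (R : Fin k → ℝ) (hR : ∀ (i : Fin n) (l : Fin k), ‖lam i‖ < R l) :
    ∑ σ : Fin k ↪ Fin n,
      MvPolynomial.eval (fun m => lam (σ m)) Q /
        (∏ m : Fin k,
          ((∏ l ∈ Finset.univ.filter (fun l : Fin k => m < l), (lam (σ l) - lam (σ m))) *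
            (∏ j ∈ Finset.univ \ Finset.univ.map σ, (lam j - lam (σ m)))))
      = (-1) ^ k * ((2 * (Real.pi : ℂ) * Complex.I)⁻¹) ^ k *
        iterCircleInt k
          (fun z =>
            (∏ m : Fin k, ∏ l ∈ Finset.univ.filter (fun l : Fin k => m < l), (z m - z l)) *
              MvPolynomial.eval z Q /
              ∏ l : Fin k, ∏ i : Fin n, (lam i - z l))
          R :=
  localisation_sum_eq_iterated_residue_general k n lam hlam Q R hR
end

section
/- Let k, n, N ≥ 1, let γ be a regular k-jet of a curve in ℂⁿ, and let 1 ≤ i ≤ k. The linear map that sends a k-jet Ψ of a map (ℂⁿ,0)→(ℂᴺ,0) to the i-tuple (coefficient of t¹, …, coefficient of tⁱ) of the ℂᴺ-valued polynomial Ψ∘γ is surjective onto (ℂᴺ)ⁱ. Consequently, the solution space S^{i,N}_γ = {Ψ : Ψ∘γ ≡ 0 (mod t^{i+1})} is a linear subspace of codimension i·N in the vector space of all k-jets of maps (ℂⁿ,0)→(ℂᴺ,0). -/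
open Polynomial

/-- The space of `k`-jets of maps `(ℂⁿ,0) → (ℂᴺ,0)`: `N`-tuples of polynomials in `n`
variables with total degree at most `k` and zero constant term (evaluation at `0`
vanishes). -/
noncomputable def jetSpace (n N k : ℕ) : Submodule ℂ (Fin N → MvPolynomial (Fin n) ℂ) :=
  Submodule.pi Set.univ fun _ =>
    MvPolynomial.restrictTotalDegree (Fin n) ℂ k ⊓
      LinearMap.ker (MvPolynomial.aeval (R := ℂ) (0 : Fin n → ℂ)).toLinearMap

/-- The linear map sending a tuple `Ψ` of polynomials in `n` variables to the tuple of
coefficients of `t¹, …, tⁱ` of the `ℂᴺ`-valued polynomial `Ψ ∘ γ` (substitution of the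
curve `γ` into `Ψ`). -/
noncomputable def jetCoeffMap (n N k i : ℕ) (γ : Fin n → Polynomial ℂ) :
    (Fin N → MvPolynomial (Fin n) ℂ) →ₗ[ℂ] (Fin i → Fin N → ℂ) :=
  LinearMap.pi fun m => LinearMap.pi fun j =>
    (Polynomial.lcoeff ℂ ((m : ℕ) + 1)) ∘ₗ
      (MvPolynomial.aeval (R := ℂ) γ).toLinearMap ∘ₗ LinearMap.proj j

lemma jetSpace_fd (n N k : ℕ) : FiniteDimensional ℂ (jetSpace n N k) := by
  set q := MvPolynomial.restrictTotalDegree (Fin n) ℂ k with hq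
  have hqfg : q.FG := by
    rw [← Submodule.fg_top]
    exact Module.finite_def.mp inferInstance
  have hfg : (jetSpace n N k).FG := by
    refine Submodule.fg_pi fun j => ?_
    set p := q ⊓ LinearMap.ker
      (MvPolynomial.aeval (R := ℂ) (0 : Fin n → ℂ)).toLinearMap with hp
    have hle : p ≤ q := inf_le_left
    have h1 : (Submodule.comap q.subtype p).FG := IsNoetherian.noetherian _
    have h2 := h1.map q.subtype
    rwa [Submodule.map_comap_subtype, inf_eq_right.mpr hle] at h2
  exact Module.Finite.iff_fg.mpr hfg

set_option maxHeartbeats 1000000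
set_option synthInstance.maxHeartbeats 400000

/-- For a regular `k`-jet `γ` of a curve in `ℂⁿ` and `1 ≤ i ≤ k`, the
linear map `Ψ ↦ (coefficients of t¹, …, tⁱ of Ψ∘γ)` is surjective from the space of `k`-jets
of maps `(ℂⁿ,0) → (ℂᴺ,0)` onto `(ℂᴺ)ⁱ`; consequently the solution space
`S^{i,N}_γ = {Ψ : Ψ∘γ ≡ 0 (mod t^{i+1})}` is a linear subspace of codimension `i·N`. -/
theorem jet_solution_space_codim
    (k n N i : ℕ) (hk : 1 ≤ k) (hn : 1 ≤ n) (hN : 1 ≤ N) (hi : 1 ≤ i) (hik : i ≤ k)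
    (γ : Fin n → Polynomial ℂ)
    (hγdeg : ∀ l, (γ l).natDegree ≤ k)
    (hγ0 : ∀ l, (γ l).coeff 0 = 0)
    (hγreg : ∃ l, (γ l).coeff 1 ≠ 0) :
    Function.Surjective ((jetCoeffMap n N k i γ).domRestrict (jetSpace n N k)) ∧
    Module.finrank ℂ (jetSpace n N k) =
      Module.finrank ℂ
        ((jetSpace n N k ⊓ LinearMap.ker (jetCoeffMap n N k i γ)) :
          Submodule ℂ (Fin N → MvPolynomial (Fin n) ℂ)) + i * N := by
  classical
  obtain ⟨l, hl⟩ := hγreg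
  obtain ⟨s, hs⟩ : Polynomial.X ∣ γ l := Polynomial.X_dvd_iff.mpr (hγ0 l)
  have hc : s.coeff 0 = (γ l).coeff 1 := by
    rw [hs, Polynomial.coeff_X_mul]
  -- coefficients of powers of γ l
  have hpow : ∀ p m : ℕ, ((γ l) ^ p).coeff m =
      if p ≤ m then (s ^ p).coeff (m - p) else 0 := by
    intro p m
    rw [hs, mul_pow, mul_comm, Polynomial.coeff_mul_X_pow']
  -- the i × i matrix of coefficients
  set M : Matrix (Fin i) (Fin i) ℂ :=
    fun m p => ((γ l) ^ ((p : ℕ) + 1)).coeff ((m : ℕ) + 1) with hM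
  have hMlow : ∀ m p : Fin i, m < p → M m p = 0 := by
    intro m p h
    simp only [hM, hpow]
    rw [if_neg (by omega)]
  have hMdiag : ∀ m : Fin i, M m m = ((γ l).coeff 1) ^ ((m : ℕ) + 1) := by
    intro m
    simp only [hM, hpow, if_pos le_rfl, Nat.sub_self]
    rw [← hc]
    simp [Polynomial.coeff_zero_eq_eval_zero]
  have hdet : M.det ≠ 0 := by
    rw [Matrix.det_of_lowerTriangular M (by
      intro a b hab
      exact hMlow a b hab)]
    refine Finset.prod_ne_zero_iff.mpr fun m _ => ?_
    rw [hMdiag m]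
    exact pow_ne_zero _ hl
  have hMsurj : Function.Surjective M.mulVec :=
    Matrix.mulVec_surjective_iff_isUnit.mpr
      ((Matrix.isUnit_iff_isUnit_det M).mpr (isUnit_iff_ne_zero.mpr hdet))
  have hsurj : Function.Surjective
      ((jetCoeffMap n N k i γ).domRestrict (jetSpace n N k)) := by
    intro v
    choose a ha using fun j : Fin N => hMsurj (fun m => v m j)
    refine ⟨⟨fun j => ∑ p : Fin i, a j p •
      (MvPolynomial.X l : MvPolynomial (Fin n) ℂ) ^ ((p : ℕ) + 1), ?_⟩, ?_⟩
    · intro j _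
      refine Submodule.sum_mem _ fun p _ => Submodule.smul_mem _ _ ⟨?_, ?_⟩
      · rw [SetLike.mem_coe, MvPolynomial.mem_restrictTotalDegree,
          MvPolynomial.totalDegree_X_pow]
        omega
      · simp only [SetLike.mem_coe, LinearMap.mem_ker, AlgHom.toLinearMap_apply, map_pow,
          MvPolynomial.aeval_X, Pi.zero_apply]
        exact zero_pow (by omega)
    · funext m j
      simp only [LinearMap.domRestrict_apply, jetCoeffMap, LinearMap.pi_apply,
        LinearMap.coe_comp, Function.comp_apply, LinearMap.proj_apply,
        AlgHom.toLinearMap_apply, map_sum, map_smul, map_pow, MvPolynomial.aeval_X,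
        Polynomial.lcoeff_apply, Polynomial.finset_sum_coeff, Polynomial.coeff_smul,
        smul_eq_mul]
      have := congrFun (ha j) m
      rw [Matrix.mulVec, dotProduct] at this
      rw [← this]
      exact Finset.sum_congr rfl fun p _ => mul_comm _ _
  refine ⟨hsurj, ?_⟩
  haveI := jetSpace_fd n N k
  have hrn := LinearMap.finrank_range_add_finrank_ker
    ((jetCoeffMap n N k i γ).domRestrict (jetSpace n N k))
  rw [LinearMap.range_eq_top.mpr hsurj, finrank_top] at hrn
  have h1 : Module.finrank ℂ (Fin i → Fin N → ℂ) = i * N := by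
    simp [Module.finrank_pi_fintype]
  have h2 : Module.finrank ℂ
      (LinearMap.ker ((jetCoeffMap n N k i γ).domRestrict (jetSpace n N k))) =
      Module.finrank ℂ ((jetSpace n N k ⊓ LinearMap.ker (jetCoeffMap n N k i γ)) :
        Submodule ℂ (Fin N → MvPolynomial (Fin n) ℂ)) := by
    rw [LinearMap.ker_domRestrict]
    have e : (Submodule.comap (jetSpace n N k).subtype
        (LinearMap.ker (jetCoeffMap n N k i γ))) ≃ₗ[ℂ]
        ((jetSpace n N k ⊓ LinearMap.ker (jetCoeffMap n N k i γ)) :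
          Submodule ℂ (Fin N → MvPolynomial (Fin n) ℂ)) := by
      rw [show Submodule.comap (jetSpace n N k).subtype
          (LinearMap.ker (jetCoeffMap n N k i γ)) =
          Submodule.comap (jetSpace n N k).subtype
          (jetSpace n N k ⊓ LinearMap.ker (jetCoeffMap n N k i γ)) by
        rw [Submodule.comap_inf, Submodule.comap_subtype_self, top_inf_eq]]
      exact Submodule.comapSubtypeEquivOfLe inf_le_left
    exact e.finrank_eq
  omega
end

section
/- Let k ≥ 1 and let A be a commutative local ℂ-algebra with maximal ideal m, finite-dimensional over ℂ with dim_ℂ A = k and residue field A/m ≅ ℂ. Then A is isomorphic as a ℂ-algebra to ℂ[z]/(z^k) if and only if m^{k−1} ≠ 0. -/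
open Polynomial

/-! If `m ^ (k - 1) ≠ 0`, Nakayama makes the chain `A = m ^ 0 ⊋ m ⊋ ⋯ ⊋ m ^ (k - 1) ⊋ 0` strict,
and `k` strict steps inside a `k`-dimensional space each lower the dimension by exactly one.
So `A = K ⊕ m` and `m / m ^ 2` is a line, whence `m = (x)` by Nakayama and `m ^ k = 0`.
Then `A = K + x A = K[x] + x ^ k A = K[x]`, so `X ↦ x` induces a surjection
`K[X] / (X ^ k) → A`, which is an isomorphism since both sides have dimension `k`.
Conversely, the class of `X` is nilpotent, hence lies in `m`, and its `(k - 1)`-st power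
is nonzero. -/

theorem Nat.apply_eq_sub_of_apply_succ_lt {f : ℕ → ℕ} {k : ℕ} (h0 : f 0 ≤ k)
    (hf : ∀ i < k, f (i + 1) < f i) : ∀ i ≤ k, f i = k - i := by
  have upper : ∀ i ≤ k, f i + i ≤ k := by
    intro i hi
    induction i with
    | zero => simpa using h0
    | succ i ih =>
      have := hf i hi
      have := ih (by omega)
      omega
  have lower : ∀ j i, i + j ≤ k → f (i + j) + j ≤ f i := by
    intro j
    induction j with
    | zero => simp
    | succ j ih =>
      intro i hij
      have := hf (i + j) (by omega)
      have := ih i (by omega)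
      rw [← Nat.add_assoc i j 1]
      omega
  intro i hi
  have := upper i hi
  have := lower (k - i) i (by omega)
  rw [Nat.add_sub_cancel' hi] at this
  omega

theorem Submodule.span_singleton_sup_eq_of_finrank_le {K V : Type*} [DivisionRing K]
    [AddCommGroup V] [Module K V] [FiniteDimensional K V] {N M : Submodule K V} {x : V}
    (hxM : x ∈ M) (hxN : x ∉ N) (hNM : N ≤ M) (h : Module.finrank K M ≤ Module.finrank K N + 1) :
    span K {x} ⊔ N = M := by
  have hsup : N < span K {x} ⊔ N :=
    lt_of_le_of_ne le_sup_right fun hN ↦ hxN (hN ▸ mem_sup_left (mem_span_singleton_self x))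
  refine eq_of_le_of_finrank_le (sup_le (span_le.2 (by simpa)) hNM) ?_
  have := finrank_lt_finrank_of_lt hsup
  omega

namespace Polynomial

theorem exists_eq_aeval_add_pow_mul {R A : Type*} [CommSemiring R] [CommSemiring A]
    [Algebra R A] {x : A} (h : ∀ a : A, ∃ c : R, ∃ b, a = algebraMap R A c + x * b) (n : ℕ)
    (a : A) : ∃ p : R[X], ∃ b, a = aeval x p + x ^ n * b := by
  induction n with
  | zero => exact ⟨0, a, by simp⟩
  | succ n ih =>
    obtain ⟨p, b, rfl⟩ := ih
    obtain ⟨c, b', rfl⟩ := h b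
    exact ⟨p + C c * X ^ n, b', by simp only [map_add, map_mul, aeval_C, map_pow, aeval_X]; ring⟩

theorem aeval_surjective_of_pow_eq_zero {R A : Type*} [CommSemiring R]
    [CommSemiring A] [Algebra R A] {x : A}
    (h : ∀ a : A, ∃ c : R, ∃ b, a = algebraMap R A c + x * b) {n : ℕ} (hx : x ^ n = 0) :
    Function.Surjective (aeval x : R[X] →ₐ[R] A) := fun a ↦ by
  obtain ⟨p, b, rfl⟩ := exists_eq_aeval_add_pow_mul h n a
  exact ⟨p, by rw [hx, zero_mul, add_zero]⟩

theorem isNilpotent_mk_X (R : Type*) [CommRing R] (k : ℕ) :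
    IsNilpotent (Ideal.Quotient.mk (Ideal.span {X ^ k}) (X : R[X])) :=
  ⟨k, by rw [← map_pow, Ideal.Quotient.eq_zero_iff_mem]; exact Ideal.mem_span_singleton_self _⟩

theorem mk_X_pow_ne_zero_of_lt {R : Type*} [CommRing R] [Nontrivial R] {n k : ℕ} (h : n < k) :
    Ideal.Quotient.mk (Ideal.span {X ^ k}) (X ^ n : R[X]) ≠ 0 := by
  rw [Ne, Ideal.Quotient.eq_zero_iff_mem, Ideal.mem_span_singleton, X_pow_dvd_iff]
  exact fun hX ↦ by simpa using hX n h

theorem nonempty_algEquiv_quotient_span_X_pow {K A : Type*} [Field K] [CommRing A] [Algebra K A]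
    [FiniteDimensional K A] {k : ℕ} (hdim : Module.finrank K A = k) {x : A} (hx : x ^ k = 0)
    (hsurj : Function.Surjective (aeval x : K[X] →ₐ[K] A)) :
    Nonempty (A ≃ₐ[K] K[X] ⧸ Ideal.span {(X : K[X]) ^ k}) := by
  let ψ := Ideal.Quotient.liftₐ (Ideal.span {(X : K[X]) ^ k}) (aeval x) fun p hp ↦ by
    obtain ⟨q, rfl⟩ := Ideal.mem_span_singleton'.1 hp
    simp [hx]
  have : Module.Finite K (K[X] ⧸ Ideal.span {(X : K[X]) ^ k}) :=
    (AdjoinRoot.powerBasis (pow_ne_zero k X_ne_zero)).finite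
  have hψ : Function.Surjective ψ := Ideal.Quotient.lift_surjective_of_surjective _ _ hsurj
  have hfin : Module.finrank K (K[X] ⧸ Ideal.span {(X : K[X]) ^ k}) = Module.finrank K A := by
    rw [finrank_quotient_span_eq_natDegree, natDegree_X_pow, hdim]
  exact ⟨(AlgEquiv.ofBijective ψ
    ⟨(LinearMap.injective_iff_surjective_of_finrank_eq_finrank (f := ψ.toLinearMap) hfin).2 hψ,
      hψ⟩).symm⟩

end Polynomial

namespace IsLocalRing

variable {A : Type*} [CommRing A] [IsLocalRing A]

theorem maximalIdeal_pow_ne_bot_of_isNilpotent {x : A} (hx : IsNilpotent x) {n : ℕ}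
    (hn : x ^ n ≠ 0) : maximalIdeal A ^ n ≠ ⊥ := fun h ↦
  hn <| (Ideal.mem_bot).1 <| h ▸ Ideal.pow_mem_pow ((mem_maximalIdeal x).2 hx.not_isUnit) n

theorem maximalIdeal_pow_succ_lt_pow [IsNoetherianRing A] {n : ℕ}
    (h : maximalIdeal A ^ n ≠ ⊥) : maximalIdeal A ^ (n + 1) < maximalIdeal A ^ n := by
  refine lt_of_le_of_ne (Ideal.pow_le_pow_right n.le_succ) fun heq ↦ h ?_
  refine Submodule.eq_bot_of_le_smul_of_le_jacobson_bot (maximalIdeal A) _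
    (IsNoetherian.noetherian _) ?_ (maximalIdeal_le_jacobson ⊥)
  rw [Ideal.smul_eq_mul, ← pow_succ', heq]

theorem maximalIdeal_eq_span_singleton_of_le_sup [IsNoetherianRing A] {x : A}
    (hx : x ∈ maximalIdeal A) (h : maximalIdeal A ≤ Ideal.span {x} ⊔ maximalIdeal A ^ 2) :
    maximalIdeal A = Ideal.span {x} := by
  refine le_antisymm ?_ ((Ideal.span_singleton_le_iff_mem _).2 hx)
  refine Submodule.le_of_le_smul_of_le_jacobson_bot (IsNoetherian.noetherian _)
    (maximalIdeal_le_jacobson ⊥) ?_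
  rwa [Ideal.smul_eq_mul, ← sq]

section FiniteDimensional

open Module Submodule

variable {K : Type*} [Field K] [Algebra K A] [FiniteDimensional K A] {k : ℕ}

theorem finrank_maximalIdeal_pow_of_ne_bot (hdim : finrank K A = k)
    (hne : maximalIdeal A ^ (k - 1) ≠ ⊥) (i : ℕ) :
    finrank K ((maximalIdeal A ^ i).restrictScalars K) = k - i := by
  have := IsNoetherianRing.of_finite K A
  have h0 : finrank K ((maximalIdeal A ^ 0).restrictScalars K) ≤ k := by
    rw [pow_zero, Ideal.one_eq_top, restrictScalars_top, finrank_top, hdim]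
  have hchain := Nat.apply_eq_sub_of_apply_succ_lt
    (f := fun i ↦ finrank K ((maximalIdeal A ^ i).restrictScalars K)) h0 fun i hi ↦
      finrank_lt_finrank_of_lt <| (restrictScalars_lt K).2 <|
        maximalIdeal_pow_succ_lt_pow <| ne_bot_of_le_ne_bot hne (Ideal.pow_le_pow_right (by omega))
  rcases le_or_gt i k with hi | hi
  · exact hchain i hi
  · have := finrank_mono <|
      restrictScalars_mono K (Ideal.pow_le_pow_right (I := maximalIdeal A) hi.le)
    have := hchain k le_rfl
    omega

theorem maximalIdeal_pow_eq_bot_of_pow_pred_ne_bot (hdim : finrank K A = k)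
    (hne : maximalIdeal A ^ (k - 1) ≠ ⊥) : maximalIdeal A ^ k = ⊥ := by
  have := finrank_maximalIdeal_pow_of_ne_bot hdim hne k
  rwa [Nat.sub_self, finrank_eq_zero, restrictScalars_eq_bot_iff] at this

theorem exists_maximalIdeal_eq_span_singleton (hdim : finrank K A = k)
    (hne : maximalIdeal A ^ (k - 1) ≠ ⊥) : ∃ x, maximalIdeal A = Ideal.span {x} := by
  have := IsNoetherianRing.of_finite K A
  by_cases hbot : maximalIdeal A = ⊥
  · exact ⟨0, by rw [hbot, eq_comm, Ideal.span_singleton_eq_bot]⟩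
  have hlt : maximalIdeal A ^ 2 < maximalIdeal A := by
    simpa using maximalIdeal_pow_succ_lt_pow (A := A) (n := 1) (by rwa [pow_one])
  obtain ⟨x, hxm, hxm2⟩ := SetLike.exists_of_lt hlt
  refine ⟨x, maximalIdeal_eq_span_singleton_of_le_sup hxm ?_⟩
  have h1 := finrank_maximalIdeal_pow_of_ne_bot hdim hne 1
  rw [pow_one] at h1
  have h2 := finrank_maximalIdeal_pow_of_ne_bot hdim hne 2
  have hspan := span_singleton_sup_eq_of_finrank_le (K := K)
    (M := (maximalIdeal A).restrictScalars K) (N := (maximalIdeal A ^ 2).restrictScalars K)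
    hxm (by simpa) (restrictScalars_mono K hlt.le) (by omega)
  rw [← restrictScalars_le K, restrictScalars_sup, ← hspan]
  exact sup_le_sup_right (span_le.2 (by simp)) _

theorem exists_eq_algebraMap_add_mul (hdim : finrank K A = k)
    (hne : maximalIdeal A ^ (k - 1) ≠ ⊥) {x : A} (hx : maximalIdeal A = Ideal.span {x}) (a : A) :
    ∃ c : K, ∃ b, a = algebraMap K A c + x * b := by
  have hk : 0 < k := hdim ▸ finrank_pos
  have h1 := finrank_maximalIdeal_pow_of_ne_bot hdim hne 1
  rw [pow_one] at h1
  have htop := span_singleton_sup_eq_of_finrank_le (K := K) (M := ⊤)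
    (N := (maximalIdeal A).restrictScalars K) (x := 1) mem_top (by simp)
    le_top (by rw [finrank_top]; omega)
  obtain ⟨_, hc, y, hy, rfl⟩ := mem_sup.1 (htop ▸ mem_top : a ∈ _)
  obtain ⟨c, rfl⟩ := mem_span_singleton.1 hc
  rw [restrictScalars_mem, hx, Ideal.mem_span_singleton'] at hy
  obtain ⟨b, rfl⟩ := hy
  exact ⟨c, b, by rw [Algebra.algebraMap_eq_smul_one, mul_comm]⟩

end FiniteDimensional

end IsLocalRing

theorem curvilinear_algebra_iff_general
    (k : ℕ) (hk : 1 ≤ k)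
    (A : Type) [CommRing A] [IsLocalRing A] [Algebra ℂ A]
    [FiniteDimensional ℂ A] (hdim : Module.finrank ℂ A = k) :
    Nonempty (A ≃ₐ[ℂ] (Polynomial ℂ ⧸ Ideal.span {(Polynomial.X : Polynomial ℂ) ^ k}))
      ↔ (IsLocalRing.maximalIdeal A) ^ (k - 1) ≠ ⊥ := by
  constructor
  · rintro ⟨e⟩
    refine IsLocalRing.maximalIdeal_pow_ne_bot_of_isNilpotent
      ((isNilpotent_mk_X ℂ k).map e.symm) ?_
    rw [← map_pow, map_ne_zero_iff _ e.symm.injective, ← map_pow]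
    exact mk_X_pow_ne_zero_of_lt (by omega)
  · intro hne
    obtain ⟨x, hx⟩ := IsLocalRing.exists_maximalIdeal_eq_span_singleton hdim hne
    have hxk : x ^ k = 0 := by
      simpa [hx, Ideal.span_singleton_pow] using
        IsLocalRing.maximalIdeal_pow_eq_bot_of_pow_pred_ne_bot hdim hne
    exact nonempty_algEquiv_quotient_span_X_pow hdim hxk <| aeval_surjective_of_pow_eq_zero
      (IsLocalRing.exists_eq_algebraMap_add_mul hdim hne hx) hxk

/-- Let `A` be a commutative local `ℂ`-algebra with maximal ideal `m`,
finite-dimensional over `ℂ` of dimension `k` and with residue field `ℂ`. Then `A` is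
isomorphic as a `ℂ`-algebra to the truncated polynomial algebra `ℂ[z]/(z^k)` if and only if
`m^{k-1} ≠ 0`. -/
theorem curvilinear_algebra_iff
    (k : ℕ) (hk : 1 ≤ k)
    (A : Type) [CommRing A] [IsLocalRing A] [Algebra ℂ A]
    [FiniteDimensional ℂ A] (hdim : Module.finrank ℂ A = k)
    (hres : Nonempty (IsLocalRing.ResidueField A ≃ₐ[ℂ] ℂ)) :
    Nonempty (A ≃ₐ[ℂ] (Polynomial ℂ ⧸ Ideal.span {(Polynomial.X : Polynomial ℂ) ^ k}))
      ↔ (IsLocalRing.maximalIdeal A) ^ (k - 1) ≠ ⊥ :=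
  curvilinear_algebra_iff_general k hk A hdim
end
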